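/- arXiv:2407.12365 — 4 statements merged into one kernel-verified Lean document; each statement's English description precedes it below -/
import Mathlib

section
/- Let a > 0 and x, s ≥ 0. Then e^{-(x-s)²/(4a)} - e^{-(x+s)²/(4a)} ≤ 2s/√(2e·a). -/
/-!
The difference is `g (x - s) - g (x + s)` for the heat kernel profile `g y = exp (-y² / (4a))`,
so by the mean value theorem it suffices to bound `|g'| ≤ 1 / √(2e·a)`. With `u = y² / (2a)`,
`g' (y) ² = (2a)⁻¹ · u e^{-u}`, and `u e^{-u} ≤ e⁻¹`.
-/

open Real

lemma hasDerivAt_exp_neg_sq_div (a y : ℝ) :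
    HasDerivAt (fun y => exp (-y ^ 2 / (4 * a))) (-(y / (2 * a) * exp (-y ^ 2 / (4 * a)))) y := by
  convert ((hasDerivAt_pow 2 y).fun_neg.div_const (4 * a)).exp using 1
  ring

lemma abs_mul_exp_neg_sq_div_le {a : ℝ} (ha : 0 < a) (y : ℝ) :
    |y / (2 * a) * exp (-y ^ 2 / (4 * a))| ≤ (√(2 * exp 1 * a))⁻¹ := by
  rw [← sqrt_inv]
  apply abs_le_sqrt
  have hsq : (y / (2 * a) * exp (-y ^ 2 / (4 * a))) ^ 2 =
      (2 * a)⁻¹ * (y ^ 2 / (2 * a) * exp (-(y ^ 2 / (2 * a)))) := by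
    rw [mul_pow, ← exp_nat_mul]
    ring_nf
  have hrhs : (2 * exp 1 * a)⁻¹ = (2 * a)⁻¹ * exp (-1) := by
    rw [exp_neg]
    ring
  rw [hsq, hrhs]
  gcongr
  exact mul_exp_neg_le_exp_neg_one _

lemma abs_exp_neg_sq_div_sub_le {a : ℝ} (ha : 0 < a) (u v : ℝ) :
    |exp (-u ^ 2 / (4 * a)) - exp (-v ^ 2 / (4 * a))| ≤ |u - v| / √(2 * exp 1 * a) := by
  have h := Convex.norm_image_sub_le_of_norm_hasDerivWithin_le
    (fun y _ => (hasDerivAt_exp_neg_sq_div a y).hasDerivWithinAt)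
    (fun y _ => by simpa only [norm_neg, norm_eq_abs] using abs_mul_exp_neg_sq_div_le ha y)
    convex_univ (Set.mem_univ v) (Set.mem_univ u)
  simpa only [norm_eq_abs, div_eq_inv_mul] using h

theorem stmt_1_general (a x s : ℝ) (ha : 0 < a) (hs : 0 ≤ s) :
    Real.exp (-(x - s) ^ 2 / (4 * a)) - Real.exp (-(x + s) ^ 2 / (4 * a)) ≤
      2 * s / Real.sqrt (2 * Real.exp 1 * a) := by
  have hdist : |(x - s) - (x + s)| = 2 * s := by
    rw [show (x - s) - (x + s) = -(2 * s) by ring, abs_neg, abs_of_nonneg (by positivity)]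
  calc _ ≤ |exp (-(x - s) ^ 2 / (4 * a)) - exp (-(x + s) ^ 2 / (4 * a))| := le_abs_self _
    _ ≤ _ := hdist ▸ abs_exp_neg_sq_div_sub_le ha (x - s) (x + s)

theorem stmt_1 (a x s : ℝ) (ha : 0 < a) (hx : 0 ≤ x) (hs : 0 ≤ s) :
    Real.exp (-(x - s) ^ 2 / (4 * a)) - Real.exp (-(x + s) ^ 2 / (4 * a)) ≤
      2 * s / Real.sqrt (2 * Real.exp 1 * a) :=
  stmt_1_general a x s ha hs
end

section
/- For every x ≥ 0 and y > 0, the quantity |(e^{-(x-y)²/4} - e^{-(x+y)²/4})/y - x·e^{-x²/4}| is bounded by C·y for a universal constant C > 0. -/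
/-!
With `g t = exp (-t ^ 2 / 4)` one has `g' t = -(t / 2) * g t`, so the quantity is
`-(g (x + y) - g (x - y) - 2 g'(x) y) / y`, the error of a central difference quotient.
Taylor's theorem at first order on both sides of `x`, with `|g''| ≤ 1`, bounds it by `2 y`
for every real `x` and every `y > 0`.
-/

open Real Metric

section Taylor

variable {f f' f'' : ℝ → ℝ} {M : ℝ}

theorem abs_sub_sub_mul_le_of_abs_deriv2_le (hf : ∀ t, HasDerivAt f (f' t) t)
    (hf' : ∀ t, HasDerivAt f' (f'' t) t) (hM : ∀ t, |f'' t| ≤ M) (x h : ℝ) :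
    |f (x + h) - f x - f' x * h| ≤ M * h ^ 2 := by
  have hlip : ∀ t, |f' t - f' x| ≤ M * |t - x| := fun t =>
    convex_univ.norm_image_sub_le_of_norm_hasDerivWithin_le
      (fun s _ => (hf' s).hasDerivWithinAt) (fun s _ => hM s) (Set.mem_univ x) (Set.mem_univ t)
  have hslope : ∀ t ∈ closedBall x |h|, |f' t - f' x| ≤ M * |h| := fun t ht =>
    (hlip t).trans <| mul_le_mul_of_nonneg_left (mem_closedBall.1 ht) ((abs_nonneg _).trans (hM 0))
  have hmvt := (convex_closedBall x |h|).norm_image_sub_le_of_norm_hasDerivWithin_le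
    (f := fun t => f t - f' x * t)
    (fun t _ => ((hf t).sub ((hasDerivAt_id t).const_mul (f' x))).hasDerivWithinAt)
    (fun t ht => by simpa using hslope t ht) (mem_closedBall_self (abs_nonneg h))
    (show x + h ∈ closedBall x |h| by simp)
  simp only [Real.norm_eq_abs, add_sub_cancel_left] at hmvt
  calc |f (x + h) - f x - f' x * h| = |f (x + h) - f' x * (x + h) - (f x - f' x * x)| := by
        ring_nf
    _ ≤ M * |h| * |h| := hmvt
    _ = M * h ^ 2 := by rw [mul_assoc, abs_mul_abs_self, sq]

theorem abs_sub_sub_two_mul_le_of_abs_deriv2_le (hf : ∀ t, HasDerivAt f (f' t) t)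
    (hf' : ∀ t, HasDerivAt f' (f'' t) t) (hM : ∀ t, |f'' t| ≤ M) (x h : ℝ) :
    |f (x + h) - f (x - h) - 2 * f' x * h| ≤ 2 * M * h ^ 2 := by
  have hplus := abs_sub_sub_mul_le_of_abs_deriv2_le hf hf' hM x h
  have hminus := abs_sub_sub_mul_le_of_abs_deriv2_le hf hf' hM x (-h)
  rw [← sub_eq_add_neg, neg_sq] at hminus
  calc |f (x + h) - f (x - h) - 2 * f' x * h|
      = |(f (x + h) - f x - f' x * h) - (f (x - h) - f x - f' x * -h)| := by ring_nf
    _ ≤ |f (x + h) - f x - f' x * h| + |f (x - h) - f x - f' x * -h| := abs_sub _ _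
    _ ≤ 2 * M * h ^ 2 := by linarith

end Taylor

theorem hasDerivAt_exp_neg_sq_div_four (t : ℝ) :
    HasDerivAt (fun t => exp (-t ^ 2 / 4)) (-(t / 2) * exp (-t ^ 2 / 4)) t :=
  ((hasDerivAt_pow 2 t).neg.div_const 4).exp.congr_deriv (by norm_num; ring)

theorem hasDerivAt_deriv_exp_neg_sq_div_four (t : ℝ) :
    HasDerivAt (fun t => -(t / 2) * exp (-t ^ 2 / 4))
      ((t ^ 2 / 4 - 1 / 2) * exp (-t ^ 2 / 4)) t :=
  (((hasDerivAt_id t).div_const 2).neg.mul (hasDerivAt_exp_neg_sq_div_four t)).congr_deriv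
    (by simp; ring)

theorem abs_deriv2_exp_neg_sq_div_four_le_one (t : ℝ) :
    |(t ^ 2 / 4 - 1 / 2) * exp (-t ^ 2 / 4)| ≤ 1 := by
  have hexp : t ^ 2 / 4 + 1 ≤ exp (t ^ 2 / 4) := add_one_le_exp _
  rw [abs_mul, abs_of_pos (exp_pos _), neg_div, exp_neg, ← div_eq_mul_inv,
    div_le_one (exp_pos _), abs_le]
  constructor <;> nlinarith [sq_nonneg t]

theorem stmt_2 :
    ∃ C > (0 : ℝ), ∀ x y : ℝ, 0 ≤ x → 0 < y →
      |(Real.exp (-(x - y) ^ 2 / 4) - Real.exp (-(x + y) ^ 2 / 4)) / y -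
          x * Real.exp (-x ^ 2 / 4)| ≤ C * y := by
  refine ⟨2, two_pos, fun x y _ hy => ?_⟩
  have hcentral := abs_sub_sub_two_mul_le_of_abs_deriv2_le hasDerivAt_exp_neg_sq_div_four
    hasDerivAt_deriv_exp_neg_sq_div_four abs_deriv2_exp_neg_sq_div_four_le_one x y
  have hrw : (exp (-(x - y) ^ 2 / 4) - exp (-(x + y) ^ 2 / 4)) / y - x * exp (-x ^ 2 / 4) =
      -(exp (-(x + y) ^ 2 / 4) - exp (-(x - y) ^ 2 / 4)
        - 2 * (-(x / 2) * exp (-x ^ 2 / 4)) * y) / y := by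
    field_simp
    ring
  rw [hrw, abs_div, abs_neg, abs_of_pos hy, div_le_iff₀ hy]
  linarith
end

section
/- Let u^in: [0,∞) → [0,∞) be measurable with second moment M₂ = ∫₀^∞ y²·u^in(y) dy < ∞, and let a > 0. Then for all x ≥ 0, |(1/(2√(πa)))·∫₀^∞ (e^{-(x-y)²/(4a)} - e^{-(x+y)²/(4a)})·u^in(y) dy - (M₁·x/(2√π·a^{3/2}))·e^{-x²/(4a)}| ≤ C·M₂/a^{3/2}, where M₁ = ∫₀^∞ y·u^in(y) dy and C is a universal constant. -/
/-!
The function `φ(t) = t e^{-t²/(4a)}` is `1`-Lipschitz. The kernel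
`K(y) = e^{-(x-y)²/(4a)} - e^{-(x+y)²/(4a)}` has `K(0) = 0` and
`K'(y) = (φ(x-y) + φ(x+y)) / (2a)`, so `K'` is `1/a`-Lipschitz and Taylor's formula gives
`|K(y) - K'(0) y| ≤ y²/a`, where `K'(0) = (x/a) e^{-x²/(4a)}`. Integrating against `u ≥ 0`
gives the claim with `C = 1/(2√π)`.
-/

open Real MeasureTheory Set

theorem abs_one_sub_two_mul_mul_exp_neg_le_one {v : ℝ} (hv : 0 ≤ v) :
    |(1 - 2 * v) * exp (-v)| ≤ 1 := by
  rw [abs_mul, abs_exp, ← le_div_iff₀ (exp_pos _), exp_neg, div_inv_eq_mul, one_mul]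
  have h₁ := add_one_le_exp v
  have h₂ := add_one_le_exp (v / 2)
  have h₃ : exp (v / 2) ^ 2 = exp v := by rw [← exp_nat_mul]; ring_nf
  refine abs_le.2 ⟨?_, by linarith⟩
  nlinarith

theorem lipschitzWith_mul_exp_neg_sq_div {a : ℝ} (ha : 0 ≤ a) :
    LipschitzWith 1 (fun t : ℝ => t * exp (-t ^ 2 / (4 * a))) := by
  have hderiv (t : ℝ) : HasDerivAt (fun t : ℝ => t * exp (-t ^ 2 / (4 * a)))
      ((1 - 2 * (t ^ 2 / (4 * a))) * exp (-(t ^ 2 / (4 * a)))) t := by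
    refine ((hasDerivAt_id' t).fun_mul
      ((hasDerivAt_pow 2 t).fun_neg.div_const (4 * a)).exp).congr_deriv ?_
    rw [neg_div]
    ring
  refine lipschitzWith_of_nnnorm_deriv_le (fun t => (hderiv t).differentiableAt) fun t => ?_
  rw [(hderiv t).deriv, ← NNReal.coe_le_coe, coe_nnnorm, Real.norm_eq_abs, NNReal.coe_one]
  exact abs_one_sub_two_mul_mul_exp_neg_le_one (by positivity)

theorem abs_sub_sub_deriv_mul_le_of_lipschitzWith {f f' : ℝ → ℝ} {L : NNReal}
    (hf : ∀ s, HasDerivAt f (f' s) s) (hf' : LipschitzWith L f') (x y : ℝ) :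
    |f y - f x - f' x * (y - x)| ≤ L * (y - x) ^ 2 := by
  have hbound : ∀ s ∈ uIcc x y, ‖f' s - f' x‖ ≤ L * |y - x| := fun s hs =>
    calc ‖f' s - f' x‖ ≤ L * |s - x| := by simpa [Real.dist_eq] using hf'.dist_le_mul s x
      _ ≤ L * |y - x| := mul_le_mul_of_nonneg_left (abs_sub_left_of_mem_uIcc hs) L.coe_nonneg
  have hmvt := convex_uIcc x y |>.norm_image_sub_le_of_norm_hasDerivWithin_le
    (f := fun s => f s - f' x * s)
    (fun s _ => ((hf s).sub ((hasDerivAt_id s).const_mul (f' x))).hasDerivWithinAt.congr_deriv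
      (by simp)) hbound left_mem_uIcc right_mem_uIcc
  rw [Real.norm_eq_abs, Real.norm_eq_abs] at hmvt
  calc |f y - f x - f' x * (y - x)| = |f y - f' x * y - (f x - f' x * x)| := by ring_nf
    _ ≤ L * |y - x| * |y - x| := hmvt
    _ = L * (y - x) ^ 2 := by rw [mul_assoc, abs_mul_abs_self, sq]

theorem hasDerivAt_exp_sub_exp (a x s : ℝ) :
    HasDerivAt (fun y => exp (-(x - y) ^ 2 / (4 * a)) - exp (-(x + y) ^ 2 / (4 * a)))
      (((x - s) * exp (-(x - s) ^ 2 / (4 * a)) + (x + s) * exp (-(x + s) ^ 2 / (4 * a)))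
        / (2 * a)) s := by
  have hm := ((hasDerivAt_id' s).const_sub x).fun_pow 2 |>.fun_neg.div_const (4 * a) |>.exp
  have hp := ((hasDerivAt_id' s).const_add x).fun_pow 2 |>.fun_neg.div_const (4 * a) |>.exp
  refine (hm.fun_sub hp).congr_deriv ?_
  field_simp
  ring

theorem abs_exp_sub_exp_sub_mul_le {a : ℝ} (ha : 0 ≤ a) (x y : ℝ) :
    |exp (-(x - y) ^ 2 / (4 * a)) - exp (-(x + y) ^ 2 / (4 * a))
      - x / a * exp (-x ^ 2 / (4 * a)) * y| ≤ y ^ 2 / a := by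
  set φ : ℝ → ℝ := fun t => t * exp (-t ^ 2 / (4 * a))
  have hφ (s t : ℝ) : |φ s - φ t| ≤ |s - t| := by
    simpa [Real.dist_eq] using (lipschitzWith_mul_exp_neg_sq_div ha).dist_le_mul s t
  have hlip : LipschitzWith (1 / a).toNNReal fun s => (φ (x - s) + φ (x + s)) / (2 * a) := by
    refine LipschitzWith.of_dist_le' fun s t => ?_
    rw [Real.dist_eq, Real.dist_eq, ← sub_div, abs_div,
      abs_of_nonneg (by positivity : 0 ≤ 2 * a)]
    calc |φ (x - s) + φ (x + s) - (φ (x - t) + φ (x + t))| / (2 * a)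
        ≤ (|φ (x - s) - φ (x - t)| + |φ (x + s) - φ (x + t)|) / (2 * a) := by
          gcongr
          exact (abs_add_le _ _).trans_eq' (by ring_nf)
      _ ≤ (|s - t| + |s - t|) / (2 * a) := by
          gcongr ?_ / _
          refine add_le_add ?_ ?_
          · simpa [abs_sub_comm] using hφ (x - s) (x - t)
          · simpa using hφ (x + s) (x + t)
      _ = 1 / a * |s - t| := by ring
  have := abs_sub_sub_deriv_mul_le_of_lipschitzWith (hasDerivAt_exp_sub_exp a x) hlip 0 y
  rw [Real.coe_toNNReal _ (by positivity)] at this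
  simp only [sub_zero, add_zero, sub_self] at this
  convert this using 2 <;> ring

theorem abs_integral_sub_mul_integral_le {α : Type*} [MeasurableSpace α] {μ : Measure α}
    {f g h : α → ℝ} (c : ℝ) (hf : AEStronglyMeasurable f μ) (hg : AEStronglyMeasurable g μ)
    (hh : Integrable h μ) (hfg : ∀ᵐ x ∂μ, |f x - c * g x| ≤ h x) :
    |∫ x, f x ∂μ - c * ∫ x, g x ∂μ| ≤ ∫ x, h x ∂μ := by
  have hr : Integrable (fun x => f x - c * g x) μ :=
    hh.mono' (hf.sub (hg.const_mul c)) (by simpa only [Real.norm_eq_abs] using hfg)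
  by_cases hgi : Integrable g μ
  · have hfi : Integrable f μ := (hr.add (hgi.const_mul c)).congr (ae_of_all _ fun x => by simp)
    rw [← integral_const_mul, ← integral_sub hfi (hgi.const_mul c)]
    simpa only [Real.norm_eq_abs] using norm_integral_le_of_norm_le (f := fun x => f x - c * g x)
      hh (by simpa only [Real.norm_eq_abs] using hfg)
  rcases eq_or_ne c 0 with rfl | hc
  · simp only [zero_mul, sub_zero] at hfg ⊢
    simpa only [Real.norm_eq_abs] using
      norm_integral_le_of_norm_le (f := f) hh (by simpa only [Real.norm_eq_abs] using hfg)
  -- when `g` is not integrable neither is `f`, and both integrals take the junk value `0`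
  have hfi : ¬ Integrable f μ := fun hfi =>
    hgi (by simpa [hc] using (hfi.sub hr).const_mul c⁻¹)
  rw [integral_undef hfi, integral_undef hgi, mul_zero, sub_zero, abs_zero]
  exact integral_nonneg_of_ae (hfg.mono fun x hx => (abs_nonneg _).trans hx)

theorem rpow_three_halves {a : ℝ} (ha : 0 ≤ a) : a ^ (3 / 2 : ℝ) = a * √a := by
  rw [show (3 / 2 : ℝ) = 1 + 1 / 2 by norm_num, Real.rpow_add' ha (by norm_num), Real.rpow_one,
    ← Real.sqrt_eq_rpow]

theorem stmt_15 :
    ∃ C > (0 : ℝ), ∀ (uin : ℝ → ℝ), (∀ y, 0 ≤ uin y) → Measurable uin →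
      ∀ (M₁ M₂ : ℝ), M₁ = (∫ y in Set.Ioi (0 : ℝ), y * uin y) →
        M₂ = (∫ y in Set.Ioi (0 : ℝ), y ^ 2 * uin y) →
        MeasureTheory.IntegrableOn (fun y => y ^ 2 * uin y) (Set.Ioi 0) →
        ∀ a : ℝ, 0 < a → ∀ x : ℝ, 0 ≤ x →
          |1 / (2 * Real.sqrt (Real.pi * a)) *
              (∫ y in Set.Ioi (0 : ℝ),
                (Real.exp (-(x - y) ^ 2 / (4 * a)) - Real.exp (-(x + y) ^ 2 / (4 * a))) * uin y) -
            M₁ * x / (2 * Real.sqrt Real.pi * a ^ (3 / 2 : ℝ)) * Real.exp (-x ^ 2 / (4 * a))| ≤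
            C * M₂ / a ^ (3 / 2 : ℝ) := by
  refine ⟨1 / (2 * √π), by positivity, ?_⟩
  intro u hu hu_meas M₁ M₂ hM₁ hM₂ hu₂ a ha x _
  set c := x / a * exp (-x ^ 2 / (4 * a)) with hc
  set K : ℝ → ℝ := fun y => exp (-(x - y) ^ 2 / (4 * a)) - exp (-(x + y) ^ 2 / (4 * a))
  have hK := abs_integral_sub_mul_integral_le (μ := volume.restrict (Ioi 0))
    (f := fun y => K y * u y) (g := fun y => y * u y) (h := fun y => 1 / a * (y ^ 2 * u y)) c
    (by fun_prop) (by fun_prop) (hu₂.const_mul (1 / a)) (ae_of_all _ fun y => by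
      rw [show K y * u y - c * (y * u y) = (K y - c * y) * u y by ring, abs_mul,
        abs_of_nonneg (hu y)]
      calc |K y - c * y| * u y ≤ y ^ 2 / a * u y :=
            mul_le_mul_of_nonneg_right (abs_exp_sub_exp_sub_mul_le ha.le x y) (hu y)
        _ = 1 / a * (y ^ 2 * u y) := by ring)
  rw [integral_const_mul, ← hM₁, ← hM₂] at hK
  have hscale : 0 < 1 / (2 * √(π * a)) := by positivity
  calc _ = |1 / (2 * √(π * a)) * ((∫ y in Ioi 0, K y * u y) - c * M₁)| := by
        rw [rpow_three_halves ha.le, Real.sqrt_mul Real.pi_pos.le, hc]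
        congr 1
        ring
    _ ≤ 1 / (2 * √(π * a)) * (1 / a * M₂) := by
        rw [abs_mul, abs_of_pos hscale]
        gcongr
    _ = _ := by
        rw [rpow_three_halves ha.le, Real.sqrt_mul Real.pi_pos.le]
        ring
end

section
/- Let δ ∈ (1,2) and suppose g: [0,∞) → [0,∞) is measurable with g(s) ≤ C₀·(1+s)^{-δ} for all s ≥ 0 and g(s) ≥ c₀·s^{-δ} for s ≥ 1 with c₀ > 0. Then there exist constants 0 < c ≤ C such that for all sufficiently large a > 0, c·a^{-(1+δ)/2} ≤ (1/(2√π))·a^{-3/2}·∫₀^∞ s·e^{-s²/(4a)}·g(s) ds ≤ C·a^{-(1+δ)/2}. -/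
/-! Put `t = 4a`. Since `s g(s) ≤ C₀ s^(1-δ)`, the integral is at most the Gaussian moment
`C₀ ∫₀^∞ s^(1-δ) e^(-s²/t) ds = C₀ Γ((2-δ)/2) t^((2-δ)/2) / 2`. From below it is at least the
contribution of the window `√t/2 < s ≤ √t`, where `e^(-s²/t) ≥ e⁻¹` and, as `δ ≥ 1`,
`s g(s) ≥ c₀ s^(1-δ) ≥ c₀ (√t)^(1-δ)`; this gives `c₀ e⁻¹ t^((2-δ)/2) / 2`. Both bounds scale like
`a^((2-δ)/2)`, and the prefactor `a^(-3/2)` turns this into `a^(-(1+δ)/2)`. -/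

open Real Set MeasureTheory

section GaussianMoment

variable {p t : ℝ}

lemma integrableOn_rpow_mul_exp_neg_sq_div (hp : -1 < p) (ht : 0 < t) :
    IntegrableOn (fun s : ℝ => s ^ p * exp (-s ^ 2 / t)) (Ioi 0) := by
  simpa only [neg_mul, ← neg_div, inv_mul_eq_div] using
    integrableOn_rpow_mul_exp_neg_mul_sq (inv_pos.2 ht) hp

lemma integral_rpow_mul_exp_neg_sq_div (hp : -1 < p) (ht : 0 < t) :
    ∫ s in Ioi 0, s ^ p * exp (-s ^ 2 / t) = t ^ ((p + 1) / 2) * Gamma ((p + 1) / 2) / 2 := by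
  have h := integral_rpow_mul_exp_neg_mul_rpow two_pos hp (inv_pos.2 ht)
  simp only [rpow_two, neg_mul, ← neg_div, inv_mul_eq_div] at h
  rw [h, inv_rpow ht.le, ← rpow_neg ht.le, neg_div, neg_neg]
  ring

end GaussianMoment

section HeavyTail

variable {g : ℝ → ℝ} {δ C₀ c₀ t : ℝ}

lemma le_mul_rpow_neg_of_le_mul_one_add_rpow (hδ : 0 ≤ δ) (hnneg : ∀ s ≥ 0, 0 ≤ g s)
    (hub : ∀ s ≥ 0, g s ≤ C₀ * (1 + s) ^ (-δ)) {s : ℝ} (hs : 0 < s) :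
    g s ≤ C₀ * s ^ (-δ) := by
  have hC₀ : 0 ≤ C₀ := by simpa using (hnneg 0 le_rfl).trans (hub 0 le_rfl)
  calc g s ≤ C₀ * (1 + s) ^ (-δ) := hub s hs.le
    _ ≤ C₀ * s ^ (-δ) := mul_le_mul_of_nonneg_left
      (rpow_le_rpow_of_nonpos hs (le_add_of_nonneg_left zero_le_one) (neg_nonpos.2 hδ)) hC₀

lemma mul_exp_neg_sq_div_mul_le {s : ℝ} (hs : 0 < s) (hg : g s ≤ C₀ * s ^ (-δ)) :
    s * exp (-s ^ 2 / t) * g s ≤ C₀ * (s ^ (1 - δ) * exp (-s ^ 2 / t)) :=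
  calc s * exp (-s ^ 2 / t) * g s ≤ s * exp (-s ^ 2 / t) * (C₀ * s ^ (-δ)) := by gcongr
    _ = C₀ * (s ^ (1 - δ) * exp (-s ^ 2 / t)) := by
      rw [sub_eq_add_neg, rpow_add hs, rpow_one]
      ring

lemma integrableOn_mul_exp_neg_sq_div_mul (hδ : δ < 2) (ht : 0 < t) (hmeas : Measurable g)
    (hnneg : ∀ s > 0, 0 ≤ g s) (hub : ∀ s > 0, g s ≤ C₀ * s ^ (-δ)) :
    IntegrableOn (fun s => s * exp (-s ^ 2 / t) * g s) (Ioi 0) := by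
  have hp : -1 < 1 - δ := by linarith
  refine Integrable.mono' ((integrableOn_rpow_mul_exp_neg_sq_div hp ht).const_mul C₀)
    (by fun_prop) ?_
  filter_upwards [ae_restrict_mem measurableSet_Ioi] with s (hs : 0 < s)
  rw [norm_of_nonneg (by have := hnneg s hs; positivity)]
  exact mul_exp_neg_sq_div_mul_le hs (hub s hs)

lemma integral_mul_exp_neg_sq_div_mul_le (hδ : δ < 2) (ht : 0 < t)
    (hint : IntegrableOn (fun s => s * exp (-s ^ 2 / t) * g s) (Ioi 0))
    (hub : ∀ s > 0, g s ≤ C₀ * s ^ (-δ)) :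
    ∫ s in Ioi 0, s * exp (-s ^ 2 / t) * g s ≤
      C₀ * (t ^ ((2 - δ) / 2) * Gamma ((2 - δ) / 2) / 2) := by
  have hp : -1 < 1 - δ := by linarith
  calc ∫ s in Ioi 0, s * exp (-s ^ 2 / t) * g s
      ≤ ∫ s in Ioi 0, C₀ * (s ^ (1 - δ) * exp (-s ^ 2 / t)) :=
        setIntegral_mono_on hint ((integrableOn_rpow_mul_exp_neg_sq_div hp ht).const_mul C₀)
          measurableSet_Ioi fun s hs => mul_exp_neg_sq_div_mul_le hs (hub s hs)
    _ = C₀ * (t ^ ((2 - δ) / 2) * Gamma ((2 - δ) / 2) / 2) := by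
      rw [integral_const_mul, integral_rpow_mul_exp_neg_sq_div hp ht]
      ring_nf

lemma le_mul_exp_neg_sq_div_mul_of_mem_Ioc (hδ : 1 ≤ δ) (ht : 4 ≤ t) (hc₀ : 0 ≤ c₀)
    (hnneg : ∀ s > 0, 0 ≤ g s) (hlb : ∀ s ≥ 1, c₀ * s ^ (-δ) ≤ g s) {s : ℝ}
    (hs : s ∈ Ioc (sqrt t / 2) (sqrt t)) :
    c₀ * exp (-1) * sqrt t ^ (1 - δ) ≤ s * exp (-s ^ 2 / t) * g s := by
  obtain ⟨hs₁, hs₂⟩ := hs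
  have ht0 : 0 < t := by linarith
  have hsqrt : 2 ≤ sqrt t := by
    simpa using sqrt_le_sqrt (show (2 : ℝ) ^ 2 ≤ t by linarith)
  have hs0 : 0 < s := by linarith
  have hexp : exp (-1) ≤ exp (-s ^ 2 / t) := by
    gcongr
    rw [le_div_iff₀ ht0, neg_mul, one_mul, neg_le_neg_iff]
    calc s ^ 2 ≤ sqrt t ^ 2 := by gcongr
      _ = t := sq_sqrt ht0.le
  calc c₀ * exp (-1) * sqrt t ^ (1 - δ)
      ≤ c₀ * exp (-1) * s ^ (1 - δ) := mul_le_mul_of_nonneg_left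
        (rpow_le_rpow_of_nonpos hs0 hs₂ (by linarith)) (by positivity)
    _ = s * exp (-1) * (c₀ * s ^ (-δ)) := by
        rw [sub_eq_add_neg, rpow_add hs0, rpow_one]
        ring
    _ ≤ s * exp (-s ^ 2 / t) * g s := by
        have := hnneg s hs0
        gcongr
        exact hlb s (by linarith)

lemma le_integral_mul_exp_neg_sq_div_mul (hδ : 1 ≤ δ) (ht : 4 ≤ t) (hc₀ : 0 ≤ c₀)
    (hnneg : ∀ s > 0, 0 ≤ g s) (hlb : ∀ s ≥ 1, c₀ * s ^ (-δ) ≤ g s)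
    (hint : IntegrableOn (fun s => s * exp (-s ^ 2 / t) * g s) (Ioi 0)) :
    c₀ * exp (-1) / 2 * t ^ ((2 - δ) / 2) ≤ ∫ s in Ioi 0, s * exp (-s ^ 2 / t) * g s := by
  have ht0 : 0 < t := by linarith
  have hwindow : Ioc (sqrt t / 2) (sqrt t) ⊆ Ioi 0 := fun s hs =>
    lt_of_le_of_lt (by positivity) hs.1
  calc c₀ * exp (-1) / 2 * t ^ ((2 - δ) / 2)
      = c₀ * exp (-1) * sqrt t ^ (1 - δ) * volume.real (Ioc (sqrt t / 2) (sqrt t)) := by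
        rw [volume_real_Ioc_of_le (half_le_self (sqrt_nonneg t)), sub_half,
          mul_assoc _ (sqrt t ^ _), mul_div_assoc', ← rpow_add_one (sqrt_pos.2 ht0).ne', sqrt_eq_rpow, ← rpow_mul ht0.le]
        ring_nf
    _ ≤ ∫ s in Ioc (sqrt t / 2) (sqrt t), s * exp (-s ^ 2 / t) * g s :=
        setIntegral_ge_of_const_le_real measurableSet_Ioc measure_Ioc_lt_top.ne
          (fun s hs => le_mul_exp_neg_sq_div_mul_of_mem_Ioc hδ ht hc₀ hnneg hlb hs)
          (hint.mono_set hwindow)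
    _ ≤ ∫ s in Ioi 0, s * exp (-s ^ 2 / t) * g s := by
        refine setIntegral_mono_set hint ?_ hwindow.eventuallyLE
        filter_upwards [ae_restrict_mem measurableSet_Ioi] with s (hs : 0 < s)
        have := hnneg s hs
        positivity

end HeavyTail

theorem stmt_19 (δ : ℝ) (hδ : δ ∈ Set.Ioo (1 : ℝ) 2) (g : ℝ → ℝ)
    (hmeas : Measurable g) (hnneg : ∀ s ≥ (0 : ℝ), 0 ≤ g s)
    (C₀ : ℝ) (hub : ∀ s ≥ (0 : ℝ), g s ≤ C₀ * (1 + s) ^ (-δ))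
    (c₀ : ℝ) (hc₀ : 0 < c₀) (hlb : ∀ s ≥ (1 : ℝ), c₀ * s ^ (-δ) ≤ g s) :
    ∃ c C : ℝ, 0 < c ∧ c ≤ C ∧ ∃ A : ℝ, ∀ a ≥ A,
      c * a ^ (-(1 + δ) / 2) ≤
        1 / (2 * Real.sqrt Real.pi) * a ^ (-(3 / 2 : ℝ)) *
          (∫ s in Set.Ioi (0 : ℝ), s * Real.exp (-s ^ 2 / (4 * a)) * g s) ∧
      1 / (2 * Real.sqrt Real.pi) * a ^ (-(3 / 2 : ℝ)) *
          (∫ s in Set.Ioi (0 : ℝ), s * Real.exp (-s ^ 2 / (4 * a)) * g s) ≤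
        C * a ^ (-(1 + δ) / 2) := by
  obtain ⟨hδ₁, hδ₂⟩ := hδ
  set K := 1 / (2 * sqrt π)
  set r := (2 - δ) / 2 with hr
  have hnneg' : ∀ s > 0, 0 ≤ g s := fun s hs => hnneg s hs.le
  have hub' : ∀ s > 0, g s ≤ C₀ * s ^ (-δ) := fun s hs =>
    le_mul_rpow_neg_of_le_mul_one_add_rpow (by linarith) hnneg hub hs
  set c := K * (c₀ * exp (-1) / 2 * 4 ^ r)
  set C := K * (C₀ * (4 ^ r * Gamma r / 2))
  refine ⟨c, max C c, by positivity, le_max_right _ _, 1, fun a ha => ?_⟩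
  have ha₀ : 0 < a := by linarith
  have hscale : a ^ (-(3 / 2 : ℝ)) * (4 * a) ^ r = 4 ^ r * a ^ (-(1 + δ) / 2) := by
    rw [mul_rpow zero_le_four ha₀.le, mul_left_comm, ← rpow_add ha₀, hr]
    ring_nf
  have hint :=
    integrableOn_mul_exp_neg_sq_div_mul (t := 4 * a) hδ₂ (by positivity) hmeas hnneg' hub'
  have hK : 0 ≤ K * a ^ (-(3 / 2 : ℝ)) := by positivity
  constructor
  · calc c * a ^ (-(1 + δ) / 2)
        = K * a ^ (-(3 / 2 : ℝ)) * (c₀ * exp (-1) / 2 * (4 * a) ^ r) := by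
          linear_combination -(K * (c₀ * exp (-1) / 2)) * hscale
      _ ≤ _ := mul_le_mul_of_nonneg_left (le_integral_mul_exp_neg_sq_div_mul hδ₁.le
          (by linarith) hc₀.le hnneg' hlb hint) hK
  · calc _ ≤ K * a ^ (-(3 / 2 : ℝ)) * (C₀ * ((4 * a) ^ r * Gamma r / 2)) :=
          mul_le_mul_of_nonneg_left (integral_mul_exp_neg_sq_div_mul_le hδ₂ (by positivity)
            hint hub') hK
      _ = C * a ^ (-(1 + δ) / 2) := by
          linear_combination (K * (C₀ * Gamma r / 2)) * hscale
      _ ≤ max C c * a ^ (-(1 + δ) / 2) := by gcongr; exact le_max_left _ _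
end
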